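/- Let f : [0,1] × ℝ^{2n} → ℝ^{2n} be a smooth family of maps such that f₀ = id and, for each t, f_t := f(t,·) is a symplectomorphism of ℝ^{2n} (a C¹ diffeomorphism with everywhere symplectic Jacobian); assume (t,z) ↦ f_t(z) and its time derivative ḟ_t(z) := ∂_t f(t,z) are continuously differentiable. Define H(z,t) = −∫₀¹ z · [J (ḟ_t ∘ f_t^{−1})(λz)] dλ. Then (f_t) is the Hamiltonian flow of H: for every z₀ ∈ ℝ^{2n} and t ∈ [0,1], ∂_t f_t(z₀) = J ∇_z H(f_t(z₀), t). -/

import Mathlib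

/-! Let `X_t = ḟ_t ∘ f_t⁻¹`. Exchanging the order of differentiation, `∂ₜ Df_t = D ḟ_t`,
so differentiating `Df_tᵀ J Df_t = J` in `t` shows that `J · DX_t` is a symmetric matrix:
the 1-form `⟪J X_t, ·⟫` is closed. By the Poincaré lemma on the star-shaped space `ℝ²ⁿ`,
its primitive is `z ↦ ∫₀¹ ⟪z, J X_t(λz)⟫ dλ = -H(z,t)`. Hence `J ∇H(·,t) = -J J X_t = X_t`,
and `X_t(f_t z₀) = ḟ_t(z₀)`. -/

open Matrix
open scoped RealInnerProductSpace

noncomputable section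

/-- The standard symplectic matrix `J = [[0, I], [−I, 0]]`. -/
def Jmat (n : ℕ) : Matrix (Fin n ⊕ Fin n) (Fin n ⊕ Fin n) ℝ :=
  Matrix.fromBlocks 0 1 (-1) 0

/-- Phase space `ℝ²ⁿ` as a euclidean space. -/
abbrev EE (n : ℕ) : Type := EuclideanSpace ℝ (Fin n ⊕ Fin n)

def toEE (n : ℕ) (v : Fin n ⊕ Fin n → ℝ) : EE n := WithLp.toLp 2 v
def fromEE (n : ℕ) (v : EE n) : Fin n ⊕ Fin n → ℝ := v

section ParametricIntegral

variable {E G : Type*} [NormedAddCommGroup E] [NormedSpace ℝ E]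
  [NormedAddCommGroup G] [NormedSpace ℝ G]

theorem ContDiff.continuous_fderiv_fst {F : E → ℝ → G}
    (hF : ContDiff ℝ 1 (Function.uncurry F)) :
    Continuous fun p : E × ℝ => fderiv ℝ (F · p.2) p.1 := by
  have hF' : ContDiff ℝ 1 (Function.uncurry fun (p : E × ℝ) (z : E) => F z p.2) :=
    hF.comp (contDiff_snd.prodMk (contDiff_snd.comp contDiff_fst))
  exact (hF'.fderiv (n := 0) contDiff_fst le_rfl).continuous

theorem ContDiff.hasFDerivAt_fst {F : E → ℝ → G} (hF : ContDiff ℝ 1 (Function.uncurry F))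
    (z : E) (u : ℝ) : HasFDerivAt (F · u) (fderiv ℝ (F · u) z) z :=
  ((hF.comp (contDiff_id.prodMk contDiff_const)).differentiable one_ne_zero z).hasFDerivAt

theorem hasFDerivAt_intervalIntegral_of_contDiff {F : E → ℝ → G}
    (hF : ContDiff ℝ 1 (Function.uncurry F)) (a b : ℝ) (z₀ : E) :
    HasFDerivAt (fun z => ∫ u in a..b, F z u) (∫ u in a..b, fderiv ℝ (F · u) z₀) z₀ := by
  have hF' := hF.continuous_fderiv_fst
  obtain ⟨C, hC⟩ :
      ∃ C, ∀ p ∈ ({z₀} : Set E) ×ˢ Set.uIcc a b, ‖fderiv ℝ (F · p.2) p.1‖ ≤ C :=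
    (isCompact_singleton.prod isCompact_uIcc).exists_bound_of_continuousOn hF'.continuousOn
  have hbound : ∀ᶠ z in nhds z₀, ∀ u ∈ Set.uIcc a b, ‖fderiv ℝ (F · u) z‖ < C + 1 :=
    isCompact_uIcc.eventually_forall_of_forall_eventually fun u hu =>
      (continuous_norm.comp hF').continuousAt.eventually_lt continuousAt_const
        ((hC (z₀, u) ⟨rfl, hu⟩).trans_lt (lt_add_one C))
  obtain ⟨s, hs, hsC⟩ := hbound.exists_mem
  refine intervalIntegral.hasFDerivAt_integral_of_dominated_of_fderiv_le
    (μ := MeasureTheory.volume)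
    (F' := fun z u => fderiv ℝ (F · u) z) (bound := fun _ => C + 1)
    hs ?_ ?_ ?_ ?_ intervalIntegrable_const ?_
  · exact Filter.Eventually.of_forall fun z =>
      (hF.continuous.comp (continuous_const.prodMk continuous_id)).aestronglyMeasurable
  · exact (hF.continuous.comp (continuous_const.prodMk continuous_id)).intervalIntegrable a b
  · exact (hF'.comp (continuous_const.prodMk continuous_id)).aestronglyMeasurable
  · exact Filter.Eventually.of_forall fun u hu z hz =>
      (hsC z hz u (Set.uIoc_subset_uIcc hu)).le
  · exact Filter.Eventually.of_forall fun u _ z _ => hF.hasFDerivAt_fst z u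

theorem hasDerivAt_fderiv_of_contDiff_deriv [CompleteSpace G] {f f' : ℝ → E → G}
    (hf'C : ContDiff ℝ 1 (Function.uncurry f')) (hf' : ∀ t z, HasDerivAt (f · z) (f' t z) t)
    {A : ℝ → E →L[ℝ] G} {ζ : E} (hA : ∀ s, HasFDerivAt (f s) (A s) ζ) (t : ℝ) :
    HasDerivAt A (fderiv ℝ (f' t) ζ) t := by
  set F : E → ℝ → G := fun z r => f' r z
  have hF : ContDiff ℝ 1 (Function.uncurry F) := hf'C.comp (contDiff_snd.prodMk contDiff_fst)
  have hf_eq : ∀ s, f s = fun z => f 0 z + ∫ r in (0 : ℝ)..s, F z r := fun s =>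
      funext fun z => by
    rw [intervalIntegral.integral_eq_sub_of_hasDerivAt (fun r _ => hf' r z)
      ((hF.continuous.comp (continuous_const.prodMk continuous_id)).intervalIntegrable 0 s)]
    abel
  have hA_eq : A = fun s => A 0 + ∫ r in (0 : ℝ)..s, fderiv ℝ (f' r) ζ := funext fun s =>
    (hA s).unique <| hf_eq s ▸ (hA 0).add (hasFDerivAt_intervalIntegral_of_contDiff hF 0 s ζ)
  have hcont : Continuous fun r => fderiv ℝ (f' r) ζ :=
    hF.continuous_fderiv_fst.comp (continuous_const.prodMk continuous_id)
  rw [hA_eq]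
  exact (intervalIntegral.integral_hasDerivAt_right (hcont.intervalIntegrable 0 t)
    (hcont.stronglyMeasurableAtFilter _ _) hcont.continuousAt).const_add (A 0)

end ParametricIntegral

section Poincare

variable {E : Type*} [NormedAddCommGroup E] [InnerProductSpace ℝ E] [CompleteSpace E]

theorem hasGradientAt_integral_inner_smul {Y : E → E} (hY : ContDiff ℝ 1 Y)
    (hsymm : ∀ z v w, ⟪v, fderiv ℝ Y z w⟫ = ⟪w, fderiv ℝ Y z v⟫) (w : E) :
    HasGradientAt (fun z => ∫ u in (0 : ℝ)..1, ⟪z, Y (u • z)⟫) (Y w) w := by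
  set F : E → ℝ → ℝ := fun z u => ⟪z, Y (u • z)⟫
  have hF : ContDiff ℝ 1 (Function.uncurry F) :=
    contDiff_fst.inner ℝ (hY.comp (contDiff_snd.smul contDiff_fst))
  have hYd : ∀ z, HasFDerivAt Y (fderiv ℝ Y z) z := fun z =>
    ((hY.differentiable one_ne_zero) z).hasFDerivAt
  have hFd : ∀ u v, fderiv ℝ (F · u) w v = ⟪v, Y (u • w)⟫ + u * ⟪v, fderiv ℝ Y (u • w) w⟫ := by
    intro u v
    have hd : HasFDerivAt (F · u) _ w := (hasFDerivAt_id w).inner ℝ ((hYd (u • w)).comp w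
      ((hasFDerivAt_id w).const_smul u))
    rw [hd.fderiv]
    simp [fderivInnerCLM_apply, real_inner_smul_right, hsymm (u • w) w v, add_comm]
  have hprim : ∀ v, ∀ u ∈ Set.uIcc (0 : ℝ) 1,
      HasDerivAt (fun u : ℝ => u * ⟪v, Y (u • w)⟫) (fderiv ℝ (F · u) w v) u := by
    intro v u _
    have hYu : HasDerivAt (fun u : ℝ => Y (u • w)) (fderiv ℝ Y (u • w) w) u :=
      (hYd (u • w)).comp_hasDerivAt u (by simpa using (hasDerivAt_id u).smul_const w)
    refine ((hasDerivAt_id' u).mul ((hasDerivAt_const u v).inner ℝ hYu)).congr_deriv ?_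
    rw [hFd]
    simp
  have hcont : Continuous fun u => fderiv ℝ (F · u) w :=
    hF.continuous_fderiv_fst.comp (continuous_const.prodMk continuous_id)
  refine (hasFDerivAt_intervalIntegral_of_contDiff hF 0 1 w).congr_fderiv ?_
  ext v
  rw [ContinuousLinearMap.intervalIntegral_apply (hcont.intervalIntegrable 0 1),
    intervalIntegral.integral_eq_sub_of_hasDerivAt (hprim v)
      ((hcont.clm_apply continuous_const).intervalIntegrable 0 1)]
  simp [real_inner_comm]

end Poincare

section Symplectic

variable {n : ℕ}

def Jclm (n : ℕ) : EE n →L[ℝ] EE n := (Matrix.toEuclideanLin (Jmat n)).toContinuousLinearMap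

theorem toEE_Jmat_mulVec (v : EE n) : toEE n (Jmat n *ᵥ fromEE n v) = Jclm n v := rfl

theorem Jmat_mul_self : Jmat n * Jmat n = -1 := by
  simp [Jmat, fromBlocks_multiply, ← fromBlocks_one, fromBlocks_neg]

theorem Jmat_transpose : (Jmat n)ᵀ = -Jmat n := by
  simp [Jmat, fromBlocks_transpose, fromBlocks_neg]

theorem inner_eq_fromEE_dotProduct (a b : EE n) : ⟪a, b⟫ = fromEE n a ⬝ᵥ fromEE n b := by
  simp [PiLp.inner_apply, dotProduct, fromEE, mul_comm]

theorem fromEE_dotProduct_Jmat_mulVec (a b : EE n) :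
    fromEE n a ⬝ᵥ (Jmat n *ᵥ fromEE n b) = ⟪a, Jclm n b⟫ :=
  (inner_eq_fromEE_dotProduct a (Jclm n b)).symm

theorem Jclm_Jclm (v : EE n) : Jclm n (Jclm n v) = -v := by
  change toEE n (Jmat n *ᵥ (Jmat n *ᵥ fromEE n v)) = -v
  rw [mulVec_mulVec, Jmat_mul_self, neg_mulVec, one_mulVec]
  rfl

theorem inner_Jclm_left (a b : EE n) : ⟪Jclm n a, b⟫ = -⟪a, Jclm n b⟫ := by
  rw [inner_eq_fromEE_dotProduct, inner_eq_fromEE_dotProduct]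
  change (Jmat n *ᵥ fromEE n a) ⬝ᵥ fromEE n b = -(fromEE n a ⬝ᵥ (Jmat n *ᵥ fromEE n b))
  rw [dotProduct_mulVec, ← vecMul_transpose, Jmat_transpose, vecMul_neg, neg_dotProduct]

theorem inner_toEuclideanLin_Jclm_of_symplectic {M : Matrix (Fin n ⊕ Fin n) (Fin n ⊕ Fin n) ℝ}
    (hM : Mᵀ * Jmat n * M = Jmat n) (a b : EE n) :
    ⟪toEuclideanLin M a, Jclm n (toEuclideanLin M b)⟫ = ⟪a, Jclm n b⟫ := by
  rw [inner_eq_fromEE_dotProduct, inner_eq_fromEE_dotProduct]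
  change (M *ᵥ fromEE n a) ⬝ᵥ (Jmat n *ᵥ (M *ᵥ fromEE n b))
      = fromEE n a ⬝ᵥ (Jmat n *ᵥ fromEE n b)
  rw [dotProduct_mulVec, ← vecMul_transpose, vecMul_vecMul, dotProduct_mulVec, vecMul_vecMul, hM,
    ← dotProduct_mulVec]

theorem inner_Jclm_hasDerivAt_comm {A : ℝ → EE n →L[ℝ] EE n} {A' : EE n →L[ℝ] EE n} {t : ℝ}
    (hA : HasDerivAt A A' t) (hsymp : ∀ s a b, ⟪A s a, Jclm n (A s b)⟫ = ⟪a, Jclm n b⟫)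
    (a b : EE n) : ⟪A t a, Jclm n (A' b)⟫ = ⟪A t b, Jclm n (A' a)⟫ := by
  have hAv : ∀ v, HasDerivAt (fun s => A s v) (A' v) t := fun v => by
    simpa using hA.clm_apply (hasDerivAt_const t v)
  have hderiv : HasDerivAt (fun s => ⟪A s a, Jclm n (A s b)⟫)
      (⟪A t a, Jclm n (A' b)⟫ + ⟪A' a, Jclm n (A t b)⟫) t :=
    (hAv a).inner ℝ ((Jclm n).hasFDerivAt.comp_hasDerivAt t (hAv b))
  have hzero := hderiv.unique ((funext fun s => hsymp s a b) ▸ hasDerivAt_const t ⟪a, Jclm n b⟫)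
  rw [real_inner_comm (Jclm n (A t b)), inner_Jclm_left] at hzero
  linarith

theorem inner_Jclm_fderiv_comp_inv_comm {f f' finv : ℝ → EE n → EE n}
    {Df : ℝ → EE n → Matrix (Fin n ⊕ Fin n) (Fin n ⊕ Fin n) ℝ}
    (hf'C : ContDiff ℝ 1 (Function.uncurry f')) (hf' : ∀ t z, HasDerivAt (f · z) (f' t z) t)
    (hDf : ∀ t z, HasFDerivAt (f t) (toEuclideanLin (Df t z)).toContinuousLinearMap z)
    (hDfsymp : ∀ t z, (Df t z)ᵀ * Jmat n * Df t z = Jmat n)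
    {t : ℝ} (hinv : Function.RightInverse (finv t) (f t)) {z : EE n}
    (hfinv : DifferentiableAt ℝ (finv t) z) (v₁ v₂ : EE n) :
    ⟪v₁, Jclm n (fderiv ℝ (f' t ∘ finv t) z v₂)⟫ =
      ⟪v₂, Jclm n (fderiv ℝ (f' t ∘ finv t) z v₁)⟫ := by
  set ζ := finv t z
  set A : ℝ → EE n →L[ℝ] EE n := fun s => (toEuclideanLin (Df s ζ)).toContinuousLinearMap
  set K := fderiv ℝ (finv t) z
  have hA' : HasDerivAt A (fderiv ℝ (f' t) ζ) t :=
    hasDerivAt_fderiv_of_contDiff_deriv hf'C hf' (fun s => hDf s ζ) t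
  have hAK : ∀ v, A t (K v) = v := by
    have hid : HasFDerivAt (f t ∘ finv t) ((A t).comp K) z :=
      (hDf t ζ).comp z hfinv.hasFDerivAt
    rw [show f t ∘ finv t = id from funext hinv] at hid
    exact DFunLike.congr_fun (hid.unique (hasFDerivAt_id z))
  have hf'd : DifferentiableAt ℝ (f' t) ζ :=
    (hf'C.comp (contDiff_const.prodMk contDiff_id)).differentiable one_ne_zero ζ
  rw [fderiv_comp z hf'd hfinv]
  calc ⟪v₁, Jclm n (fderiv ℝ (f' t) ζ (K v₂))⟫
      = ⟪A t (K v₁), Jclm n (fderiv ℝ (f' t) ζ (K v₂))⟫ := by rw [hAK]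
    _ = ⟪A t (K v₂), Jclm n (fderiv ℝ (f' t) ζ (K v₁))⟫ :=
      inner_Jclm_hasDerivAt_comm hA'
        (fun s => inner_toEuclideanLin_Jclm_of_symplectic (hDfsymp s ζ)) _ _
    _ = ⟪v₂, Jclm n (fderiv ℝ (f' t) ζ (K v₁))⟫ := by rw [hAK]

end Symplectic

theorem stmt15_general (n : ℕ) (f f' : ℝ → EE n → EE n)
    (hf'C : ContDiff ℝ 1 fun p : ℝ × EE n => f' p.1 p.2)
    (hf' : ∀ t z, HasDerivAt (fun s => f s z) (f' t z) t)
    (finv : ℝ → EE n → EE n)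
    (hinv₁ : ∀ t, Function.LeftInverse (finv t) (f t))
    (hinv₂ : ∀ t, Function.RightInverse (finv t) (f t))
    (hfinvC : ∀ t, ContDiff ℝ 1 (finv t))
    (Df : ℝ → EE n → Matrix (Fin n ⊕ Fin n) (Fin n ⊕ Fin n) ℝ)
    (hDf : ∀ t z, HasFDerivAt (f t)
      ((Matrix.toEuclideanLin (Df t z)).toContinuousLinearMap) z)
    (hDfsymp : ∀ t z, (Df t z)ᵀ * Jmat n * Df t z = Jmat n)
    (H : EE n → ℝ → ℝ)
    (hH : ∀ z t, H z t =
      -∫ u in (0:ℝ)..1, fromEE n z ⬝ᵥ (Jmat n *ᵥ fromEE n (f' t (finv t (u • z)))))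
    (z₀ : EE n) (t : ℝ) :
    HasDerivAt (fun s => f s z₀)
      (toEE n (Jmat n *ᵥ fromEE n (gradient (fun z => H z t) (f t z₀)))) t := by
  set X := f' t ∘ finv t
  have hXC : ContDiff ℝ 1 X := (hf'C.comp (contDiff_const.prodMk contDiff_id)).comp (hfinvC t)
  set Y := Jclm n ∘ X
  have hYC : ContDiff ℝ 1 Y := (Jclm n).contDiff.comp hXC
  have hYsymm : ∀ z v w, ⟪v, fderiv ℝ Y z w⟫ = ⟪w, fderiv ℝ Y z v⟫ := fun z v w => by
    rw [fderiv_comp z (Jclm n).differentiableAt (hXC.differentiable one_ne_zero z),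
      (Jclm n).fderiv]
    exact inner_Jclm_fderiv_comp_inv_comm hf'C hf' hDf hDfsymp (hinv₂ t)
      ((hfinvC t).differentiable one_ne_zero z) v w
  have hHt : (fun z => H z t) = fun z => -∫ u in (0 : ℝ)..1, ⟪z, Y (u • z)⟫ :=
    funext fun z => by simp only [hH, fromEE_dotProduct_Jmat_mulVec]; rfl
  have hgrad : HasGradientAt (fun z => H z t) (-Y (f t z₀)) (f t z₀) := by
    rw [hasGradientAt_iff_hasFDerivAt, map_neg, hHt]
    exact (hasGradientAt_integral_inner_smul hYC hYsymm _).neg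
  rw [hgrad.gradient, toEE_Jmat_mulVec, map_neg]
  simpa [Y, X, Jclm_Jclm, hinv₁ t z₀] using hf' t z₀

/-- Banyaga–Wang: a smooth isotopy `(f_t)` of symplectomorphisms of
`ℝ²ⁿ` with `f₀ = id` is the Hamiltonian flow of
`H(z,t) = −∫₀¹ z · [J (ḟ_t ∘ f_t⁻¹)(λz)] dλ`. -/
theorem stmt15 (n : ℕ) (f f' : ℝ → EE n → EE n)
    (hfC : ContDiff ℝ 1 fun p : ℝ × EE n => f p.1 p.2)
    (hf'C : ContDiff ℝ 1 fun p : ℝ × EE n => f' p.1 p.2)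
    (hf0 : ∀ z, f 0 z = z)
    (hf' : ∀ t z, HasDerivAt (fun s => f s z) (f' t z) t)
    (finv : ℝ → EE n → EE n)
    (hinv₁ : ∀ t, Function.LeftInverse (finv t) (f t))
    (hinv₂ : ∀ t, Function.RightInverse (finv t) (f t))
    (hfinvC : ∀ t, ContDiff ℝ 1 (finv t))
    (Df : ℝ → EE n → Matrix (Fin n ⊕ Fin n) (Fin n ⊕ Fin n) ℝ)
    (hDf : ∀ t z, HasFDerivAt (f t)
      ((Matrix.toEuclideanLin (Df t z)).toContinuousLinearMap) z)
    (hDfsymp : ∀ t z, (Df t z)ᵀ * Jmat n * Df t z = Jmat n)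
    (H : EE n → ℝ → ℝ)
    (hH : ∀ z t, H z t =
      -∫ u in (0:ℝ)..1, fromEE n z ⬝ᵥ (Jmat n *ᵥ fromEE n (f' t (finv t (u • z)))))
    (z₀ : EE n) (t : ℝ) (ht : t ∈ Set.Icc (0:ℝ) 1) :
    HasDerivAt (fun s => f s z₀)
      (toEE n (Jmat n *ᵥ fromEE n (gradient (fun z => H z t) (f t z₀)))) t :=
  stmt15_general n f f' hf'C hf' finv hinv₁ hinv₂ hfinvC Df hDf hDfsymp H hH z₀ t
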